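/- Every decorated noncrossing partition p ∈ NC_Γ(g₁,…,g_k; h₁,…,h_l) can be obtained from the elementary decorated partitions — identity partitions (g;g) for g ∈ Γ, multiplication partitions (g,h; gh) for g,h ∈ Γ, and unit partitions (∅; e) — using tensor products, compositions and adjoints. -/

import Mathlib

open scoped Classical

/-- The `k` upper and `l` lower points of a partition diagram. -/
abbrev Pt (k l : ℕ) := Sum (Fin k) (Fin l)

/-- Position of a point on the boundary circle: upper points left to right,
then lower points right to left. -/
def ptIdx {k l : ℕ} : Pt k l → ℕ :=
  Sum.elim (fun i => (i : ℕ)) (fun j => k + (l - 1 - (j : ℕ)))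

/-- A partition of the `k + l` points (a setoid) is noncrossing if whenever
`a < b < x < y` in the circular order, `a ∼ x` and `b ∼ y` imply `a ∼ b`. -/
def Noncrossing {k l : ℕ} (p : Setoid (Pt k l)) : Prop :=
  ∀ a b x y : Pt k l, ptIdx a < ptIdx b → ptIdx b < ptIdx x → ptIdx x < ptIdx y →
    p.r a x → p.r b y → p.r a b

/-- `b(p)`: number of blocks of a partition. -/
noncomputable def blocks {α : Type*} (p : Setoid α) : ℕ := Nat.card (Quotient p)

/-- The three rows of points appearing in a vertical composition. -/
abbrev X3 (k l w : ℕ) := Sum (Fin k) (Sum (Fin l) (Fin w))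

def upEmb {k l w : ℕ} : Pt k l → X3 k l w := Sum.map id Sum.inl
def loEmb {k l w : ℕ} : Pt l w → X3 k l w := Sum.inr
def outEmb {k l w : ℕ} : Pt k w → X3 k l w := Sum.map id Sum.inr

/-- The partition of the three rows generated by `p` on the two upper rows and
`q` on the two lower rows. -/
def jointSetoid {k l w : ℕ} (p : Setoid (Pt k l)) (q : Setoid (Pt l w)) :
    Setoid (X3 k l w) :=
  Relation.EqvGen.setoid (fun x y =>
    (∃ a b, p.r a b ∧ x = upEmb a ∧ y = upEmb b) ∨
    (∃ a b, q.r a b ∧ x = loEmb a ∧ y = loEmb b))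

/-- Vertical composition `q ∘ p ∈ NC(k,w)` of `p ∈ NC(k,l)` and `q ∈ NC(l,w)`. -/
def compPart {k l w : ℕ} (p : Setoid (Pt k l)) (q : Setoid (Pt l w)) : Setoid (Pt k w) :=
  Setoid.comap outEmb (jointSetoid p q)

/-- `cb(p,q)`: the number of central blocks removed in the composition, i.e. blocks of
the joint partition consisting only of middle points. -/
noncomputable def cb {k l w : ℕ} (p : Setoid (Pt k l)) (q : Setoid (Pt l w)) : ℕ :=
  Nat.card {cls : Quotient (jointSetoid p q) //
    ∀ x : X3 k l w, Quotient.mk (jointSetoid p q) x = cls → ∃ j : Fin l, x = Sum.inr (Sum.inl j)}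

/-- `cy(p,q) = l + b(qp) + cb(p,q) - b(p) - b(q)`: the number of cycles removed. -/
noncomputable def cy {k l w : ℕ} (p : Setoid (Pt k l)) (q : Setoid (Pt l w)) : ℤ :=
  (l : ℤ) + blocks (compPart p q) + cb p q - blocks p - blocks q

def tleft {k l v w : ℕ} : Pt k l → Pt (k + v) (l + w) :=
  Sum.map (Fin.castAdd v) (Fin.castAdd w)

def tright {k l v w : ℕ} : Pt v w → Pt (k + v) (l + w) :=
  Sum.map (Fin.natAdd k) (Fin.natAdd l)

/-- Horizontal concatenation (tensor product) of partitions. -/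
def tensorPart {k l v w : ℕ} (p : Setoid (Pt k l)) (q : Setoid (Pt v w)) :
    Setoid (Pt (k + v) (l + w)) :=
  Relation.EqvGen.setoid (fun x y =>
    (∃ a b, p.r a b ∧ x = tleft a ∧ y = tleft b) ∨
    (∃ a b, q.r a b ∧ x = tright a ∧ y = tright b))

/-- Reflection (adjoint) of a partition, exchanging the upper and lower rows. -/
def adjPart {k l : ℕ} (p : Setoid (Pt k l)) : Setoid (Pt l k) :=
  Setoid.comap Sum.swap p

variable {Γ : Type*} [Group Γ]

/-- Ordered product of the decorations of the upper points of a block. -/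
noncomputable def wordUp {k l : ℕ} (g : Fin k → Γ) (p : Setoid (Pt k l))
    (cls : Quotient p) : Γ :=
  (((List.finRange k).filter
    (fun i => decide (Quotient.mk p (Sum.inl i : Pt k l) = cls))).map g).prod

/-- Ordered product of the decorations of the lower points of a block. -/
noncomputable def wordLo {k l : ℕ} (h : Fin l → Γ) (p : Setoid (Pt k l))
    (cls : Quotient p) : Γ :=
  (((List.finRange l).filter
    (fun j => decide (Quotient.mk p (Sum.inr j : Pt k l) = cls))).map h).prod

/-- `p ∈ NC_Γ(g₁,…,g_k; h₁,…,h_l)`: in each block, the ordered product of the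
upper decorations equals the ordered product of the lower decorations
(empty products being the unit of `Γ`). -/
def DecOK {k l : ℕ} (p : Setoid (Pt k l)) (g : Fin k → Γ) (h : Fin l → Γ) : Prop :=
  ∀ cls : Quotient p, wordUp g p cls = wordLo h p cls

/-- The decorated partitions generated by the elementary decorated partitions:
identities `(g; g)`, multiplications `(g, h; gh)` and units `(∅; e)`, under
tensor products, compositions (with matching decorations) and adjoints. -/
inductive GenDec (Γ : Type*) [Group Γ] :
    ∀ {k l : ℕ}, Setoid (Pt k l) → (Fin k → Γ) → (Fin l → Γ) → Prop where
  | id (g : Γ) : GenDec Γ (⊤ : Setoid (Pt 1 1)) (fun _ => g) (fun _ => g)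
  | mult (g h : Γ) : GenDec Γ (⊤ : Setoid (Pt 2 1)) ![g, h] (fun _ => g * h)
  | unit : GenDec Γ (⊤ : Setoid (Pt 0 1)) (fun i => i.elim0) (fun _ => 1)
  | tensor {k l v w : ℕ} {p : Setoid (Pt k l)} {q : Setoid (Pt v w)}
      {g : Fin k → Γ} {h : Fin l → Γ} {g' : Fin v → Γ} {h' : Fin w → Γ} :
      GenDec Γ p g h → GenDec Γ q g' h' →
      GenDec Γ (tensorPart p q) (Fin.append g g') (Fin.append h h')
  | comp {k l w : ℕ} {p : Setoid (Pt k l)} {q : Setoid (Pt l w)}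
      {g : Fin k → Γ} {h : Fin l → Γ} {h' : Fin w → Γ} :
      GenDec Γ p g h → GenDec Γ q h h' → GenDec Γ (compPart p q) g h'
  | adj {k l : ℕ} {p : Setoid (Pt k l)} {g : Fin k → Γ} {h : Fin l → Γ} :
      GenDec Γ p g h → GenDec Γ (adjPart p) h g

/-!
Rotating the last upper point to the right end of the lower row preserves noncrossingness, and
preserves the decoration condition once its decoration `g` is replaced by `g⁻¹`. The original
partition is recovered from the rotated one by an identity strand next to the rotated point and
a cap `(g⁻¹, g; ∅)`, which is a multiplication followed by the adjoint of a unit. This reduces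
the theorem to partitions with empty upper row.

Such a partition has a block that is an interval `[a, a + m)` of the lower row (a block of minimal
span). Its decorations multiply to `e`, so it is obtained from a unit by iterated adjoints of
multiplications, and the partition is the composition of the smaller partition without this block
with the tensor product of this block and identity strands around it.
-/

lemma GenDec.of_eq {k l : ℕ} {p p' : Setoid (Pt k l)} {g g' : Fin k → Γ} {h h' : Fin l → Γ}
    (H : GenDec Γ p g h) (hp : p = p') (hg : g = g') (hh : h = h') : GenDec Γ p' g' h' :=
  hp ▸ hg ▸ hh ▸ H

instance : Subsingleton (Setoid (Pt 0 0)) :=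
  ⟨fun _ _ => Setoid.ext fun x => isEmptyElim x⟩

lemma Fin.append_const_const {α : Type*} (a b : α) :
    Fin.append (fun _ : Fin 1 => a) (fun _ : Fin 1 => b) = ![a, b] := by
  funext i
  fin_cases i <;> rfl

lemma List.ofFn_add_castAdd {α : Type*} {m n : ℕ} (f : Fin (m + n) → α) :
    List.ofFn f = List.ofFn (fun i => f (Fin.castAdd n i)) ++ List.ofFn (fun j => f (Fin.natAdd m j)) :=
  List.ofFn_add

lemma List.prod_map_filter_eq_prod_map_ite {α M : Type*} [Monoid M] (P : α → Prop)
    [DecidablePred P] (f : α → M) (L : List α) :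
    ((L.filter fun a => decide (P a)).map f).prod = (L.map fun a => if P a then f a else 1).prod := by
  induction L with
  | nil => rfl
  | cons a L ih => by_cases ha : P a <;> simp [ha, ih]

section Diagrams

variable {k l v w : ℕ}

lemma tleft_or_tright (z : Pt (k + v) (l + w)) : (∃ a, z = tleft a) ∨ ∃ b, z = tright b := by
  rcases z with i | j
  · induction i using Fin.addCases with
    | left i => exact .inl ⟨.inl i, rfl⟩
    | right i => exact .inr ⟨.inl i, rfl⟩
  · induction j using Fin.addCases with
    | left j => exact .inl ⟨.inr j, rfl⟩
    | right j => exact .inr ⟨.inr j, rfl⟩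

lemma tensorPart_rel_tleft {p : Setoid (Pt k l)} (q : Setoid (Pt v w)) {a b : Pt k l}
    (h : p.r a b) : (tensorPart p q).r (tleft a) (tleft b) :=
  .rel _ _ (.inl ⟨a, b, h, rfl, rfl⟩)

lemma tensorPart_rel_tright (p : Setoid (Pt k l)) {q : Setoid (Pt v w)} {a b : Pt v w}
    (h : q.r a b) : (tensorPart p q).r (tright a) (tright b) :=
  .rel _ _ (.inr ⟨a, b, h, rfl, rfl⟩)

lemma tensorPart_le {p : Setoid (Pt k l)} {q : Setoid (Pt v w)} {r : Setoid (Pt (k + v) (l + w))}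
    (hp : p ≤ r.comap tleft) (hq : q ≤ r.comap tright) : tensorPart p q ≤ r :=
  Setoid.eqvGen_le <| by
    rintro _ _ (⟨a, b, hab, rfl, rfl⟩ | ⟨a, b, hab, rfl, rfl⟩)
    exacts [hp hab, hq hab]

lemma jointSetoid_rel_upEmb {p : Setoid (Pt k l)} (q : Setoid (Pt l w)) {a b : Pt k l}
    (h : p.r a b) : (jointSetoid p q).r (upEmb a) (upEmb b) :=
  .rel _ _ (.inl ⟨a, b, h, rfl, rfl⟩)

lemma jointSetoid_rel_loEmb (p : Setoid (Pt k l)) {q : Setoid (Pt l w)} {a b : Pt l w}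
    (h : q.r a b) : (jointSetoid p q).r (loEmb a) (loEmb b) :=
  .rel _ _ (.inr ⟨a, b, h, rfl, rfl⟩)

lemma compPart_le {p : Setoid (Pt k l)} {q : Setoid (Pt l w)} {r : Setoid (Pt k w)}
    (π : X3 k l w → Pt k w) (hπ : ∀ z, π (outEmb z) = z)
    (hp : p ≤ r.comap (π ∘ upEmb)) (hq : q ≤ r.comap (π ∘ loEmb)) : compPart p q ≤ r := by
  intro x y hxy
  have joint_le : jointSetoid p q ≤ r.comap π := Setoid.eqvGen_le <| by
    rintro _ _ (⟨a, b, hab, rfl, rfl⟩ | ⟨a, b, hab, rfl, rfl⟩)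
    exacts [hp hab, hq hab]
  simpa only [Setoid.comap_rel, hπ] using joint_le hxy

lemma compPart_top_eq_top {q : Setoid (Pt l w)} (hl : 0 < l)
    (hq : ∀ z, ∃ j, q.r (.inl j) z) : compPart (⊤ : Setoid (Pt k l)) q = ⊤ := by
  let J := jointSetoid (⊤ : Setoid (Pt k l)) q
  have to_mid : ∀ z : Pt k w, J.r (outEmb z) (upEmb (.inr ⟨0, hl⟩)) := by
    rintro (i | j)
    · exact jointSetoid_rel_upEmb q (a := .inl i) trivial
    · obtain ⟨j', hj'⟩ := hq (.inr j)
      exact J.trans' (J.symm' (jointSetoid_rel_loEmb _ hj'))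
        (jointSetoid_rel_upEmb q (a := .inr j') trivial)
  exact eq_top_iff.mpr fun x y _ => J.trans' (to_mid x) (J.symm' (to_mid y))

end Diagrams

def idPart (n : ℕ) : Setoid (Pt n n) := Setoid.ker (Sum.elim id id)

lemma idPart_rel_inl {n : ℕ} (x : Pt n n) : (idPart n).r x (.inl (Sum.elim id id x)) := by
  rcases x with i | i <;> rfl

lemma idPart_le_comap {n : ℕ} {α : Type*} {r : Setoid α} {f : Pt n n → α}
    (hf : ∀ i, r.r (f (.inl i)) (f (.inr i))) : idPart n ≤ r.comap f := by
  have to_inl : ∀ z, r.r (f z) (f (.inl (Sum.elim id id z))) := by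
    rintro (i | i)
    exacts [r.refl' _, r.symm' (hf i)]
  intro x y (hxy : Sum.elim id id x = Sum.elim id id y)
  exact r.trans' (to_inl x) (hxy ▸ r.symm' (to_inl y))

lemma tensorPart_idPart (a b : ℕ) : tensorPart (idPart a) (idPart b) = idPart (a + b) := by
  refine le_antisymm (tensorPart_le (idPart_le_comap fun _ => rfl) (idPart_le_comap fun _ => rfl))
    fun x y (hxy : Sum.elim id id x = Sum.elim id id y) => ?_
  let T := tensorPart (idPart a) (idPart b)
  have to_inl : ∀ z, T.r z (.inl (Sum.elim id id z)) := by
    intro z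
    rcases tleft_or_tright z with ⟨z, rfl⟩ | ⟨z, rfl⟩
    · convert tensorPart_rel_tleft (idPart b) (idPart_rel_inl z) using 1
      rcases z with i | i <;> rfl
    · convert tensorPart_rel_tright (idPart a) (idPart_rel_inl z) using 1
      rcases z with i | i <;> rfl
  exact T.trans' (to_inl x) (hxy ▸ T.symm' (to_inl y))

lemma idPart_one : idPart 1 = ⊤ :=
  eq_top_iff.mpr fun _ _ _ => Subsingleton.elim (α := Fin 1) _ _

section Generators

lemma genDec_zero_zero (p : Setoid (Pt 0 0)) (g h : Fin 0 → Γ) : GenDec Γ p g h :=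
  (GenDec.comp GenDec.unit GenDec.unit.adj).of_eq (Subsingleton.elim _ _)
    (Subsingleton.elim _ _) (Subsingleton.elim _ _)

lemma genDec_idPart (n : ℕ) (g : Fin n → Γ) : GenDec Γ (idPart n) g g := by
  induction n with
  | zero => exact genDec_zero_zero _ _ _
  | succ n ih =>
    have hg : Fin.append (Fin.init g) (fun _ : Fin 1 => g (Fin.last n)) = g := by
      rw [Fin.append_right_eq_snoc, Fin.snoc_init_self]
    exact ((ih _).tensor (.id (g (Fin.last n)))).of_eq
      (by rw [← idPart_one, tensorPart_idPart]) hg hg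

lemma genDec_cap (c : Γ) : GenDec Γ (⊤ : Setoid (Pt 2 0)) ![c, c⁻¹] (fun i => i.elim0) :=
  ((GenDec.mult c c⁻¹).comp (GenDec.unit.adj.of_eq rfl (by simp) rfl)).of_eq
    (compPart_top_eq_top one_pos fun _ => ⟨0, trivial⟩) rfl rfl

lemma genDec_top_one (m : ℕ) (h : Fin (m + 1) → Γ) :
    GenDec Γ (⊤ : Setoid (Pt 1 (m + 1))) (fun _ => (List.ofFn h).prod) h := by
  induction m with
  | zero =>
    exact (GenDec.id (h 0)).of_eq rfl (by simp) (funext fun i => by rw [Fin.fin_one_eq_zero i])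
  | succ m ih =>
    have hmid : ∀ z : Pt 2 (m + 1 + 1),
        ∃ j, (tensorPart (⊤ : Setoid (Pt 1 (m + 1))) (⊤ : Setoid (Pt 1 1))).r (.inl j) z := by
      intro z
      rcases tleft_or_tright (k := 1) (v := 1) z with ⟨z, rfl⟩ | ⟨z, rfl⟩
      · exact ⟨_, tensorPart_rel_tleft _ (a := .inl 0) trivial⟩
      · exact ⟨_, tensorPart_rel_tright _ (a := .inl 0) trivial⟩
    refine (((GenDec.mult _ (h (Fin.last _))).adj.of_eq rfl rfl
        (Fin.append_const_const _ _).symm).comp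
        ((ih (Fin.init h)).tensor (.id _))).of_eq
      (compPart_top_eq_top two_pos hmid) ?_ ?_
    · funext _
      rw [List.ofFn_succ' h, List.prod_concat]
      rfl
    · rw [Fin.append_right_eq_snoc, Fin.snoc_init_self]

lemma genDec_top_zero {m : ℕ} (hm : 0 < m) (g : Fin 0 → Γ) (h : Fin m → Γ)
    (hh : (List.ofFn h).prod = 1) : GenDec Γ (⊤ : Setoid (Pt 0 m)) g h := by
  obtain ⟨m, rfl⟩ : ∃ m', m = m' + 1 := ⟨m - 1, by omega⟩
  exact (GenDec.unit.comp ((genDec_top_one m h).of_eq rfl (by rw [hh]) rfl)).of_eq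
    (compPart_top_eq_top one_pos fun _ => ⟨0, trivial⟩) (Subsingleton.elim _ _) rfl

end Generators

lemma decOK_iff {k l : ℕ} {p : Setoid (Pt k l)} {g : Fin k → Γ} {h : Fin l → Γ} :
    DecOK p g h ↔ ∀ z, (List.ofFn fun i => if p.r (.inl i) z then g i else 1).prod =
      (List.ofFn fun j => if p.r (.inr j) z then h j else 1).prod := by
  simp only [DecOK, wordUp, wordLo, List.prod_map_filter_eq_prod_map_ite, Quotient.forall,
    Quotient.eq, List.ofFn_eq_map]

lemma Noncrossing.comap {k l k' l' : ℕ} {p : Setoid (Pt k' l')} (hp : Noncrossing p)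
    (f : Pt k l → Pt k' l') (hf : ∀ x y, ptIdx x < ptIdx y → ptIdx (f x) < ptIdx (f y)) :
    Noncrossing (p.comap f) :=
  fun _ _ _ _ hab hbx hxy hax hby => hp _ _ _ _ (hf _ _ hab) (hf _ _ hbx) (hf _ _ hxy) hax hby

section Rotation

variable {k l : ℕ}

/-- Moves the last lower point around the corner to the last upper position. -/
def rotate (k l : ℕ) : Pt k (l + 1) → Pt (k + 1) l
  | .inl i => .inl i.castSucc
  | .inr j => Fin.lastCases (motive := fun _ => Pt (k + 1) l) (.inl (Fin.last k)) .inr j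

@[simp] lemma rotate_inl (i : Fin k) : rotate k l (.inl i) = .inl i.castSucc := rfl

@[simp] lemma rotate_inr_castSucc (j : Fin l) : rotate k l (.inr j.castSucc) = .inr j := by
  simp [rotate]

@[simp] lemma rotate_inr_last : rotate k l (.inr (Fin.last l)) = .inl (Fin.last k) := by
  simp [rotate]

lemma ptIdx_rotate (z : Pt k (l + 1)) : ptIdx (rotate k l z) = ptIdx z := by
  rcases z with i | j
  · simp [ptIdx]
  · induction j using Fin.lastCases with
    | last => simp [ptIdx]
    | cast j => simp [ptIdx]; omega

lemma rotate_surjective : Function.Surjective (rotate k l) := by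
  rintro (i | j)
  · induction i using Fin.lastCases with
    | last => exact ⟨_, rotate_inr_last⟩
    | cast i => exact ⟨_, rotate_inl i⟩
  · exact ⟨_, rotate_inr_castSucc j⟩

lemma Noncrossing.comap_rotate {p : Setoid (Pt (k + 1) l)} (hp : Noncrossing p) :
    Noncrossing (p.comap (rotate k l)) :=
  hp.comap _ fun x y => by simpa only [ptIdx_rotate] using id

lemma DecOK.comap_rotate {p : Setoid (Pt (k + 1) l)} {g : Fin (k + 1) → Γ} {h : Fin l → Γ}
    (hd : DecOK p g h) :
    DecOK (p.comap (rotate k l)) (Fin.init g) (Fin.snoc h (g (Fin.last k))⁻¹) := by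
  rw [decOK_iff] at hd ⊢
  intro z
  have hz := hd (rotate k l z)
  simp only [List.ofFn_succ', List.prod_concat, Setoid.comap_rel, rotate_inl,
    rotate_inr_castSucc, rotate_inr_last, Fin.snoc_castSucc, Fin.snoc_last, Fin.init] at hz ⊢
  by_cases hlast : p.r (.inl (Fin.last k)) (rotate k l z)
  · simp only [hlast, if_true] at hz ⊢
    rw [← hz]
    group
  · simpa only [hlast, if_false, mul_one] using hz

lemma compPart_rotate_le (p : Setoid (Pt (k + 1) l)) :
    compPart (tensorPart (p.comap (rotate k l)) (⊤ : Setoid (Pt 1 1)))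
      (tensorPart (idPart l) (⊤ : Setoid (Pt 2 0)) : Setoid (Pt (l + 2) (l + 0))) ≤ p := by
  let π : X3 (k + 1) (l + 1 + 1) l → Pt (k + 1) l :=
    Sum.elim .inl (Sum.elim (fun j => if h : (j : ℕ) < l then .inr ⟨j, h⟩ else .inl (Fin.last k))
      .inr)
  have hπ : ∀ z : Pt k (l + 1), π (upEmb (tleft z)) = rotate k l z := by
    rintro (i | j)
    · rfl
    · induction j using Fin.lastCases <;> simp [π, upEmb, tleft]
  refine compPart_le π (by rintro (i | j) <;> rfl) (tensorPart_le ?_ ?_) (tensorPart_le ?_ ?_)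
  · intro x y hxy
    simpa only [Setoid.comap_rel, Function.comp_apply, hπ] using hxy
  · intro x y _
    have hlast : ∀ z : Pt 1 1, π (upEmb (tright z)) = .inl (Fin.last k) := by
      rintro (i | j)
      · simp [π, upEmb, tright, Fin.fin_one_eq_zero i, Fin.ext_iff]
      · simp [π, upEmb, tright]
    simp only [Setoid.comap_rel, Function.comp_apply, hlast]
    exact p.refl' _
  · refine idPart_le_comap fun i => ?_
    show p.r (π (loEmb (tleft (v := 2) (w := 0) (.inl i))))
      (π (loEmb (tleft (v := 2) (w := 0) (.inr i))))
    convert p.refl' (.inr i) using 2 <;> simp [π, loEmb, tleft]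
  · intro x y _
    have hlast : ∀ z : Pt 2 0, π (loEmb (tright z)) = .inl (Fin.last k) := by
      rintro (i | j)
      · simp [π, loEmb, tright]
      · exact j.elim0
    simp only [Setoid.comap_rel, Function.comp_apply, hlast]
    exact p.refl' _

/-- The rotated point is brought back to the upper row by an identity strand followed by a
cap. -/
lemma le_compPart_rotate (p : Setoid (Pt (k + 1) l)) :
    p ≤ compPart (tensorPart (p.comap (rotate k l)) (⊤ : Setoid (Pt 1 1)))
      (tensorPart (idPart l) (⊤ : Setoid (Pt 2 0)) : Setoid (Pt (l + 2) (l + 0))) := by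
  let T := tensorPart (p.comap (rotate k l)) (⊤ : Setoid (Pt 1 1))
  let Q : Setoid (Pt (l + 2) (l + 0)) := tensorPart (idPart l) (⊤ : Setoid (Pt 2 0))
  let J := jointSetoid T Q
  have to_tleft : ∀ z : Pt k (l + 1), J.r (outEmb (rotate k l z)) (upEmb (tleft z)) := by
    rintro (i | j)
    · exact J.refl' _
    · induction j using Fin.lastCases with
      | last =>
        have strand : T.r (tright (.inl 0)) (tright (.inr 0)) := tensorPart_rel_tright _ trivial
        have cap : Q.r (tright (.inl 1)) (tright (.inl 0)) := tensorPart_rel_tright _ trivial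
        rw [rotate_inr_last]
        exact J.trans' (jointSetoid_rel_upEmb Q strand) (jointSetoid_rel_loEmb T cap)
      | cast j =>
        have strand : Q.r (tleft (.inr j)) (tleft (.inl j)) :=
          tensorPart_rel_tleft _ (idPart_rel_inl (.inr j))
        rw [rotate_inr_castSucc]
        exact jointSetoid_rel_loEmb T strand
  intro x y hxy
  obtain ⟨x, rfl⟩ := rotate_surjective x
  obtain ⟨y, rfl⟩ := rotate_surjective y
  exact J.trans' (to_tleft x) (J.trans'
    (jointSetoid_rel_upEmb Q (tensorPart_rel_tleft _ hxy)) (J.symm' (to_tleft y)))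

lemma GenDec.of_comap_rotate {p : Setoid (Pt (k + 1) l)} {g : Fin (k + 1) → Γ} {h : Fin l → Γ}
    (H : GenDec Γ (p.comap (rotate k l)) (Fin.init g) (Fin.snoc h (g (Fin.last k))⁻¹)) :
    GenDec Γ p g h := by
  set c := (g (Fin.last k))⁻¹
  have hmid : Fin.append h ![c, c⁻¹] =
      Fin.append (Fin.snoc h c) (fun _ : Fin 1 => g (Fin.last k)) := by
    rw [← Fin.append_right_eq_snoc h (fun _ => c), Fin.append_assoc, inv_inv,
      Fin.append_const_const]
    rfl
  have hg : Fin.append (Fin.init g) (fun _ : Fin 1 => g (Fin.last k)) = g := by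
    rw [Fin.append_right_eq_snoc, Fin.snoc_init_self]
  exact ((H.tensor (.id _)).comp
    (((genDec_idPart l h).tensor (genDec_cap c)).of_eq rfl hmid (by simp))).of_eq
    (le_antisymm (compPart_rotate_le p) (le_compPart_rotate p)) hg rfl

end Rotation

section IntervalBlock

def RowNoncrossing {α : Type*} [LinearOrder α] (s : Setoid α) : Prop :=
  ∀ i j i' j' : α, i < j → j < i' → i' < j' → s.r i i' → s.r j j' → s.r i j

lemma Noncrossing.rowNoncrossing_inr {k l : ℕ} {p : Setoid (Pt k l)} (hp : Noncrossing p) :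
    RowNoncrossing (p.comap Sum.inr) := by
  intro i j i' j' hij hji' hi'j' hii' hjj'
  have hidx : ∀ {x y : Fin l}, x < y → ptIdx (Sum.inr y : Pt k l) < ptIdx (Sum.inr x : Pt k l) :=
    fun {x y} hxy => by simp only [ptIdx, Sum.elim_inr]; omega
  have := hp (.inr j') (.inr i') (.inr j) (.inr i) (hidx hi'j') (hidx hji') (hidx hij)
    (p.symm' hjj') (p.symm' hii')
  exact p.trans' hii' (p.trans' (p.symm' this) (p.symm' hjj'))

lemma RowNoncrossing.lt_and_lt_of_rel {α : Type*} [LinearOrder α] {s : Setoid α}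
    (hs : RowNoncrossing s) {lo t hi t' : α} (hlo : lo < t) (hhi : t < hi) (harc : s.r lo hi)
    (ht : ¬ s.r t lo) (htt' : s.r t t') : lo < t' ∧ t' < hi := by
  have hlo' : t' ≠ lo := by rintro rfl; exact ht htt'
  have hhi' : t' ≠ hi := by rintro rfl; exact ht (s.trans' htt' (s.symm' harc))
  constructor
  · by_contra! h
    exact ht (s.trans' htt' (hs t' lo t hi (lt_of_le_of_ne h hlo') hlo hhi
      (s.symm' htt') harc))
  · by_contra! h
    exact ht (s.symm' (hs lo t hi t' hlo hhi (lt_of_le_of_ne h hhi'.symm) harc htt'))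

def IsIntervalBlock {n : ℕ} (s : Setoid (Fin n)) (a m : ℕ) : Prop :=
  ∀ i j : Fin n, a ≤ (i : ℕ) → (i : ℕ) < a + m → (s.r i j ↔ a ≤ (j : ℕ) ∧ (j : ℕ) < a + m)

/-- A block of minimal span is an interval. -/
theorem RowNoncrossing.exists_isIntervalBlock {L : ℕ} {s : Setoid (Fin L)}
    (hs : RowNoncrossing s) (hL : 0 < L) :
    ∃ a m b : ℕ, 0 < m ∧ L = a + m + b ∧ IsIntervalBlock s a m := by
  let B : Fin L → Finset (Fin L) := fun j => {t | s.r t j}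
  have mem_B : ∀ {t j}, t ∈ B j ↔ s.r t j := by simp [B]
  have hB : ∀ j, (B j).Nonempty := fun j => ⟨j, mem_B.mpr (s.refl' j)⟩
  let span : Fin L → ℕ := fun j => ((B j).max' (hB j) : ℕ) - (B j).min' (hB j)
  obtain ⟨j0, -, hmin⟩ := Finset.exists_min_image Finset.univ span ⟨⟨0, hL⟩, Finset.mem_univ _⟩
  set lo := (B j0).min' (hB j0)
  set hi := (B j0).max' (hB j0)
  have hlo : s.r lo j0 := mem_B.mp (Finset.min'_mem _ _)
  have hhi : s.r hi j0 := mem_B.mp (Finset.max'_mem _ _)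
  have block : ∀ t, s.r t j0 ↔ lo ≤ t ∧ t ≤ hi := by
    refine fun t => ⟨fun ht => ⟨Finset.min'_le _ _ (mem_B.mpr ht), Finset.le_max' _ _ (mem_B.mpr ht)⟩,
      fun ⟨h1, h2⟩ => ?_⟩
    by_contra ht
    have hlot : lo < t := lt_of_le_of_ne h1 (by rintro rfl; exact ht hlo)
    have htha : t < hi := lt_of_le_of_ne h2 (by rintro rfl; exact ht hhi)
    have inside : ∀ t' ∈ B t, lo < t' ∧ t' < hi := fun t' ht' =>
      hs.lt_and_lt_of_rel hlot htha (s.trans' hlo (s.symm' hhi))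
        (fun h => ht (s.trans' h hlo)) (s.symm' (mem_B.mp ht'))
    have h1 := inside _ (Finset.min'_mem (B t) (hB t))
    have h2 := inside _ (Finset.max'_mem (B t) (hB t))
    have := hmin t (Finset.mem_univ _)
    simp only [span, Fin.lt_def] at h1 h2 this
    omega
  have hlohi : lo ≤ hi := (block lo).mp hlo |>.2
  refine ⟨lo, hi - lo + 1, L - (hi + 1), by omega, by omega, fun i j hi1 hi2 => ?_⟩
  have hi0 : s.r i j0 := (block i).mpr ⟨Fin.le_def.mpr hi1, Fin.le_def.mpr (by omega)⟩
  rw [show s.r i j ↔ s.r j j0 from ⟨fun h => s.trans' (s.symm' h) hi0,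
    fun h => s.trans' hi0 (s.symm' h)⟩, block, Fin.le_def, Fin.le_def]
  omega

end IntervalBlock

section SkipInterval

variable {a m b : ℕ}

def skipInterval (a m b : ℕ) : Fin (a + b) → Fin (a + m + b) :=
  Fin.append (fun i => Fin.castAdd b (Fin.castAdd m i)) (Fin.natAdd (a + m))

@[simp] lemma skipInterval_castAdd (i : Fin a) :
    skipInterval a m b (Fin.castAdd b i) = Fin.castAdd b (Fin.castAdd m i) :=
  Fin.append_left _ _ _

@[simp] lemma skipInterval_natAdd (i : Fin b) :
    skipInterval a m b (Fin.natAdd a i) = Fin.natAdd (a + m) i :=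
  Fin.append_right _ _ _

lemma val_skipInterval (j : Fin (a + b)) :
    (skipInterval a m b j : ℕ) = if (j : ℕ) < a then (j : ℕ) else j + m := by
  induction j using Fin.addCases with
  | left i => simp
  | right i => simp; omega

lemma skipInterval_strictMono : StrictMono (skipInterval a m b) := by
  intro x y hxy
  rw [Fin.lt_def, val_skipInterval, val_skipInterval]
  rw [Fin.lt_def] at hxy
  split_ifs <;> omega

lemma exists_skipInterval_eq {j : Fin (a + m + b)} (hj : ¬ (a ≤ (j : ℕ) ∧ (j : ℕ) < a + m)) :
    ∃ j', skipInterval a m b j' = j := by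
  by_cases hja : (j : ℕ) < a
  · exact ⟨⟨j, by omega⟩, Fin.ext (by simp [val_skipInterval, hja])⟩
  · refine ⟨⟨j - m, by omega⟩, Fin.ext ?_⟩
    rw [val_skipInterval, if_neg (by simp; omega)]
    simp; omega

variable {p : Setoid (Pt 0 (a + m + b))}

lemma Noncrossing.comap_skipInterval (hp : Noncrossing p) :
    Noncrossing (p.comap (Sum.map id (skipInterval a m b))) := by
  refine hp.comap _ ?_
  rintro (i | x) (i' | y) hxy
  · exact i.elim0
  · exact i.elim0
  · exact i'.elim0
  have := (skipInterval_strictMono (a := a) (m := m) (b := b)).lt_iff_lt (a := y) (b := x)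
  simp only [ptIdx, Sum.elim_inr, Sum.map_inr, Fin.lt_def] at hxy this ⊢
  have := (skipInterval a m b x).isLt
  omega

lemma DecOK.comap_skipInterval {g : Fin 0 → Γ} {h : Fin (a + m + b) → Γ}
    (hB : IsIntervalBlock (p.comap Sum.inr) a m) (hd : DecOK p g h) :
    DecOK (p.comap (Sum.map id (skipInterval a m b))) g (h ∘ skipInterval a m b) := by
  rw [decOK_iff] at hd ⊢
  rintro (i | j)
  · exact i.elim0
  have hj := hd (.inr (skipInterval a m b j))
  have hout : ∀ t : Fin m,
      ¬ p.r (.inr (Fin.castAdd b (Fin.natAdd a t))) (.inr (skipInterval a m b j)) := by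
    intro t ht
    have := (hB _ _ (by simp) (by simp)).mp ht
    rw [val_skipInterval] at this
    split_ifs at this <;> omega
  simpa [List.ofFn_add_castAdd, hout, Setoid.comap_rel] using hj

lemma DecOK.prod_interval {g : Fin 0 → Γ} {h : Fin (a + m + b) → Γ}
    (hB : IsIntervalBlock (p.comap Sum.inr) a m) (hm : 0 < m) (hd : DecOK p g h) :
    (List.ofFn fun t : Fin m => h (Fin.castAdd b (Fin.natAdd a t))).prod = 1 := by
  rw [decOK_iff] at hd
  set c : Fin (a + m + b) := Fin.castAdd b (Fin.natAdd a ⟨0, hm⟩)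
  have hc : a ≤ (c : ℕ) ∧ (c : ℕ) < a + m := by simp [c]; omega
  have hin : ∀ t : Fin m, p.r (.inr (Fin.castAdd b (Fin.natAdd a t))) (.inr c) :=
    fun t => p.symm' ((hB c _ hc.1 hc.2).mpr (by simp))
  have hleft : ∀ i : Fin a, ¬ p.r (.inr (Fin.castAdd b (Fin.castAdd m i))) (.inr c) :=
    fun i hi => absurd ((hB c _ hc.1 hc.2).mp (p.symm' hi)) (by simp)
  have hright : ∀ i : Fin b, ¬ p.r (.inr (Fin.natAdd (a + m) i)) (.inr c) :=
    fun i hi => absurd ((hB c _ hc.1 hc.2).mp (p.symm' hi)) (by simp)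
  simpa [List.ofFn_add_castAdd, hin, hleft, hright] using (hd (.inr c)).symm

lemma compPart_skipInterval_le (hB : IsIntervalBlock (p.comap Sum.inr) a m) :
    compPart (p.comap (Sum.map id (skipInterval a m b)))
      (tensorPart (tensorPart (idPart a) (⊤ : Setoid (Pt 0 m))) (idPart b)) ≤ p := by
  let π : X3 0 (a + b) (a + m + b) → Pt 0 (a + m + b) :=
    Sum.elim .inl (Sum.elim (fun j => .inr (skipInterval a m b j)) .inr)
  have hup : π ∘ upEmb = Sum.map id (skipInterval a m b) := by
    funext x
    rcases x with i | j <;> rfl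
  refine compPart_le π (by rintro (i | j) <;> rfl) (hup ▸ le_rfl)
    (tensorPart_le (tensorPart_le ?_ ?_) ?_)
  · exact idPart_le_comap fun i => by simp [Setoid.comap_rel, π, loEmb, tleft]
  · rintro (i | x) (i' | y) -
    · exact i.elim0
    · exact i.elim0
    · exact i'.elim0
    exact (hB _ _ (by simp) (by simp)).mpr (by simp)
  · exact idPart_le_comap fun i => by simp [Setoid.comap_rel, π, loEmb, tright]

lemma le_compPart_skipInterval (hB : IsIntervalBlock (p.comap Sum.inr) a m) :
    p ≤ compPart (p.comap (Sum.map id (skipInterval a m b)))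
      (tensorPart (tensorPart (idPart a) (⊤ : Setoid (Pt 0 m))) (idPart b)) := by
  let Q := tensorPart (tensorPart (idPart a) (⊤ : Setoid (Pt 0 m))) (idPart b)
  let J := jointSetoid (p.comap (Sum.map id (skipInterval a m b))) Q
  have to_upper : ∀ j, J.r (outEmb (.inr (skipInterval a m b j))) (upEmb (.inr j)) := by
    intro j
    refine jointSetoid_rel_loEmb _ ?_
    induction j using Fin.addCases with
    | left i =>
      rw [skipInterval_castAdd]
      exact tensorPart_rel_tleft _ (tensorPart_rel_tleft _ (idPart_rel_inl (.inr i)))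
    | right i =>
      rw [skipInterval_natAdd]
      exact tensorPart_rel_tright _ (idPart_rel_inl (.inr i))
  rintro (i | x) (i' | y) hxy
  · exact i.elim0
  · exact i.elim0
  · exact i'.elim0
  by_cases hx : a ≤ (x : ℕ) ∧ (x : ℕ) < a + m
  · have hy := (hB _ _ hx.1 hx.2).mp hxy
    have in_block : ∀ z : Fin (a + m + b), a ≤ (z : ℕ) → (z : ℕ) < a + m →
        ∃ t : Fin m, Fin.castAdd b (Fin.natAdd a t) = z :=
      fun z h1 h2 => ⟨⟨z - a, by omega⟩, Fin.ext (by simp; omega)⟩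
    obtain ⟨tx, rfl⟩ := in_block x hx.1 hx.2
    obtain ⟨ty, rfl⟩ := in_block y hy.1 hy.2
    have hq : Q.r (tleft (tright (.inr tx))) (tleft (tright (.inr ty))) :=
      tensorPart_rel_tleft _ (tensorPart_rel_tright (idPart a) (q := ⊤) trivial)
    exact jointSetoid_rel_loEmb _ hq
  · have hy : ¬ (a ≤ (y : ℕ) ∧ (y : ℕ) < a + m) := fun hy =>
      hx ((hB _ _ hy.1 hy.2).mp (p.symm' hxy))
    obtain ⟨x, rfl⟩ := exists_skipInterval_eq hx
    obtain ⟨y, rfl⟩ := exists_skipInterval_eq hy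
    exact J.trans' (to_upper x) (J.trans' (jointSetoid_rel_upEmb Q (a := .inr x) (b := .inr y) hxy)
      (J.symm' (to_upper y)))

end SkipInterval

theorem genDec_of_upper_empty {l : ℕ} (p : Setoid (Pt 0 l)) (g : Fin 0 → Γ) (h : Fin l → Γ)
    (hp : Noncrossing p) (hd : DecOK p g h) : GenDec Γ p g h := by
  induction l using Nat.strong_induction_on with
  | _ l ih =>
  rcases Nat.eq_zero_or_pos l with rfl | hl
  · exact genDec_zero_zero p g h
  obtain ⟨a, m, b, hm, rfl, hB⟩ := hp.rowNoncrossing_inr.exists_isIntervalBlock hl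
  have outside := ih (a + b) (by omega) _ _ hp.comap_skipInterval (hd.comap_skipInterval hB)
  have inside := genDec_top_zero hm (fun i => i.elim0) _ (hd.prod_interval hB hm)
  have strands := ((genDec_idPart a fun i => h (Fin.castAdd b (Fin.castAdd m i))).tensor
    inside).tensor (genDec_idPart b fun i => h (Fin.natAdd (a + m) i))
  refine (outside.comp (strands.of_eq rfl ?_ ?_)).of_eq (le_antisymm (compPart_skipInterval_le hB) (le_compPart_skipInterval hB)) rfl rfl
  · funext j
    induction j using Fin.addCases <;> simp
  · funext j
    induction j using Fin.addCases with
    | left i => induction i using Fin.addCases <;> simp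
    | right i => simp

/-- Every decorated noncrossing partition is generated by the elementary
decorated partitions under tensor products, compositions and adjoints. -/
theorem decorated_generated {k l : ℕ} (p : Setoid (Pt k l))
    (g : Fin k → Γ) (h : Fin l → Γ) (hp : Noncrossing p) (hd : DecOK p g h) :
    GenDec Γ p g h := by
  induction k generalizing l with
  | zero => exact genDec_of_upper_empty p g h hp hd
  | succ k ih => exact .of_comap_rotate (ih _ _ _ hp.comap_rotate hd.comap_rotate)
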